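/- (Utility of the exponential mechanism.) Let H be a finite nonempty set, s a score function on datasets and H with finite positive sensitivity Δs, and ε > 0. Fix a dataset D and let OPT = max_{h ∈ H} s(D,h). Then for every β ∈ (0,1), the exponential mechanism satisfies P[ s(D, M_exp(D)) ≥ OPT − (2Δs/ε)·ln(|H|/β) ] ≥ 1 − β. -/
import Mathlib


open MeasureTheory ENNReal
open scoped Classical

/-- Two datasets (finite multisets over a universe `U`) are adjacent under the
add/remove notion if their symmetric difference has cardinality 1. -/
def Adjacent {U : Type*} [DecidableEq U] (D D' : Multiset U) : Prop :=
  Multiset.card ((D - D') + (D' - D)) = 1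

/-- The probability that the exponential mechanism with score function `s`,
sensitivity `Δs` and privacy parameter `ε` outputs `h` on input dataset `D`. -/
noncomputable def expMechProb {U H : Type*} [Fintype H]
    (s : Multiset U → H → ℝ) (Δs ε : ℝ) (D : Multiset U) (h : H) : ℝ :=
  Real.exp (ε * s D h / (2 * Δs)) / ∑ h' : H, Real.exp (ε * s D h' / (2 * Δs))

/-- **Utility of the exponential mechanism.** Fix a dataset `D`, let
`OPT = max_{h∈H} s(D,h)`. Then for every `β ∈ (0,1)`,
`P[ s(D, M_exp(D)) ≥ OPT − (2Δs/ε)·ln(|H|/β) ] ≥ 1 − β`. -/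
theorem exponential_mechanism_utility {U H : Type*} [DecidableEq U] [Fintype H] [Nonempty H]
    (s : Multiset U → H → ℝ) (Δs ε : ℝ) (hΔ : 0 < Δs) (hε : 0 < ε)
    (hsens : ∀ (h : H) (D D' : Multiset U), Adjacent D D' → |s D h - s D' h| ≤ Δs)
    (D : Multiset U) (β : ℝ) (hβ : β ∈ Set.Ioo (0 : ℝ) 1) :
    1 - β ≤
      ∑ h ∈ Finset.univ.filter (fun h : H =>
          Finset.univ.sup' Finset.univ_nonempty (s D) -
            (2 * Δs / ε) * Real.log ((Fintype.card H : ℝ) / β) ≤ s D h),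
        expMechProb s Δs ε D h := by
  obtain ⟨hβ0, hβ1⟩ := hβ
  set OPT := Finset.univ.sup' Finset.univ_nonempty (s D) with hOPT
  set c := (2 * Δs / ε) * Real.log ((Fintype.card H : ℝ) / β) with hc
  set E : H → ℝ := fun h => Real.exp (ε * s D h / (2 * Δs)) with hE
  have hZpos : 0 < ∑ h' : H, E h' :=
    Finset.sum_pos (fun h _ => Real.exp_pos _) Finset.univ_nonempty
  have hcardpos : (0 : ℝ) < Fintype.card H := by
    exact_mod_cast Fintype.card_pos
  obtain ⟨h₀, -, hh₀⟩ := Finset.exists_mem_eq_sup' (Finset.univ_nonempty (α := H)) (s D)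
  have hZge : Real.exp (ε * OPT / (2 * Δs)) ≤ ∑ h' : H, E h' := by
    rw [hOPT, hh₀]
    exact Finset.single_le_sum (f := E) (fun i _ => (Real.exp_pos _).le) (Finset.mem_univ h₀)
  have hct : ε * c / (2 * Δs) = Real.log ((Fintype.card H : ℝ) / β) := by
    rw [hc]; field_simp
  have hratio : (Fintype.card H : ℝ) / β > 0 := by positivity
  have key : ∀ h : H, s D h < OPT - c →
      expMechProb s Δs ε D h ≤ β / (Fintype.card H : ℝ) := by
    intro h hh
    have h1 : E h ≤ Real.exp (ε * (OPT - c) / (2 * Δs)) := by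
      apply Real.exp_le_exp.mpr
      gcongr
    have h2 : expMechProb s Δs ε D h ≤
        Real.exp (ε * (OPT - c) / (2 * Δs)) / Real.exp (ε * OPT / (2 * Δs)) := by
      unfold expMechProb
      exact div_le_div₀ (Real.exp_pos _).le h1 (Real.exp_pos _) hZge
    have h3 : Real.exp (ε * (OPT - c) / (2 * Δs)) / Real.exp (ε * OPT / (2 * Δs))
        = β / (Fintype.card H : ℝ) := by
      rw [← Real.exp_sub]
      have : ε * (OPT - c) / (2 * Δs) - ε * OPT / (2 * Δs) = -(ε * c / (2 * Δs)) := by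
        ring
      rw [this, hct, Real.exp_neg, Real.exp_log hratio]
      rw [inv_div]
    linarith [h2, h3.le]
  have hsum1 : ∑ h : H, expMechProb s Δs ε D h = 1 := by
    unfold expMechProb
    rw [← Finset.sum_div, div_self hZpos.ne']
  have hsplit := Finset.sum_filter_add_sum_filter_not Finset.univ
    (fun h : H => OPT - c ≤ s D h) (expMechProb s Δs ε D)
  have hbad : ∑ h ∈ Finset.univ.filter (fun h : H => ¬ (OPT - c ≤ s D h)),
      expMechProb s Δs ε D h ≤ β := by
    have hb1 : ∑ h ∈ Finset.univ.filter (fun h : H => ¬ (OPT - c ≤ s D h)),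
        expMechProb s Δs ε D h ≤
        ∑ _h ∈ Finset.univ.filter (fun h : H => ¬ (OPT - c ≤ s D h)),
          β / (Fintype.card H : ℝ) := by
      apply Finset.sum_le_sum
      intro h hh
      exact key h (lt_of_not_ge (Finset.mem_filter.mp hh).2)
    have hb2 : ∑ _h ∈ Finset.univ.filter (fun h : H => ¬ (OPT - c ≤ s D h)),
        β / (Fintype.card H : ℝ) ≤ β := by
      rw [Finset.sum_const, nsmul_eq_mul]
      have hcard : ((Finset.univ.filter (fun h : H => ¬ (OPT - c ≤ s D h))).card : ℝ)
          ≤ (Fintype.card H : ℝ) := by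
        exact_mod_cast Finset.card_filter_le _ _
      calc ((Finset.univ.filter (fun h : H => ¬ (OPT - c ≤ s D h))).card : ℝ)
            * (β / (Fintype.card H : ℝ))
          ≤ (Fintype.card H : ℝ) * (β / (Fintype.card H : ℝ)) := by
            apply mul_le_mul_of_nonneg_right hcard (by positivity)
        _ = β := by field_simp
    linarith
  linarith [hsplit, hsum1.symm ▸ hsplit]
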